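/- (Failure of the Riemann–Lebesgue lemma for -1 < ν < -1/2.) Let -1 < ν < -1/2 and define f(x) = (2^{ν+1}√π / Γ(-ν-1/2)) · (1-x²)^{-ν-3/2} for 0 < x < 1 and f(x) = 0 for x ≥ 1. Then for every y > 0 the function x ↦ φ_ν(xy) f(x) x^{2ν+1} is absolutely integrable on (0, ∞) and 𝓕_ν f(y) = cos(y). In particular, 𝓕_ν f does not tend to 0 as y → ∞, so the Fourier–Bessel transform of order ν does not have the Riemann–Lebesgue property. -/

import Mathlib

open MeasureTheory Filter Set

/-- Bessel function of the first kind of order `ν`, via its power series (for `x > 0`). -/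
noncomputable def besselJ (ν : ℝ) (x : ℝ) : ℝ :=
  ∑' n : ℕ, ((-1 : ℝ) ^ n / ((n.factorial : ℝ) * Real.Gamma ((n : ℝ) + ν + 1))) *
    (x / 2) ^ (2 * (n : ℝ) + ν)

/-- The Fourier–Bessel kernel `φ_ν(x) = x^{-ν} J_ν(x)` for `x > 0`,
extended by `φ_ν(0) = 1/(2^ν Γ(ν+1))`. -/
noncomputable def fbKernel (ν : ℝ) (x : ℝ) : ℝ :=
  if x = 0 then 1 / ((2 : ℝ) ^ ν * Real.Gamma (ν + 1)) else x ^ (-ν) * besselJ ν x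

/-- The weighted measure `x^{2ν+1} dx` on `(0, ∞)`. -/
noncomputable def wMeasure (ν : ℝ) : Measure ℝ :=
  (volume.restrict (Ioi (0 : ℝ))).withDensity fun x => ENNReal.ofReal (x ^ (2 * ν + 1))

/-- The Fourier–Bessel transform of order `ν`. -/
noncomputable def fbTransform (ν : ℝ) (f : ℝ → ℂ) (y : ℝ) : ℂ :=
  ∫ x in Ioi (0 : ℝ), (fbKernel ν (x * y) * x ^ (2 * ν + 1)) • f x

/-!
Expand `φ_ν(xy) = ∑ cₙ (xy)^{2n}` and integrate against `f` term by term. The `n`-th term is a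
Beta integral, `∫₀¹ x^{2n+2ν+1} (1-x²)^{-ν-3/2} dx = Γ(n+ν+1) Γ(-ν-1/2) / (2 Γ(n+1/2))`, and
Legendre's duplication formula together with the normalisation of `f` turns it into
`(-1)ⁿ y^{2n} / (2n)!`, the `n`-th Taylor term of `cos y`. Each term has constant sign on `(0, 1)`,
so the absolute values of the integrals, `y^{2n} / (2n)!`, are summable and justify the interchange.
Finally `𝓕_ν f (2πk) = 1` for all `k ≥ 1`.
-/

open Real

theorem Real.integral_rpow_mul_one_sub_rpow {p q : ℝ} (hp : 0 < p) (hq : 0 < q) :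
    ∫ u in Ioo (0 : ℝ) 1, u ^ (p - 1) * (1 - u) ^ (q - 1) =
      Gamma p * Gamma q / Gamma (p + q) := by
  have hbeta : Complex.betaIntegral p q =
      ((∫ u in Ioo (0 : ℝ) 1, u ^ (p - 1) * (1 - u) ^ (q - 1) : ℝ) : ℂ) := by
    rw [← integral_Ioc_eq_integral_Ioo, ← intervalIntegral.integral_of_le zero_le_one,
      ← intervalIntegral.integral_ofReal, Complex.betaIntegral]
    refine intervalIntegral.integral_congr fun u hu => ?_
    rw [uIcc_of_le zero_le_one] at hu
    push_cast [Complex.ofReal_cpow hu.1, Complex.ofReal_cpow (sub_nonneg.2 hu.2)]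
    rfl
  have hΓ := Complex.Gamma_mul_Gamma_eq_betaIntegral (s := p) (t := q) (by simpa) (by simpa)
  rw [hbeta, ← Complex.ofReal_add, Complex.Gamma_ofReal, Complex.Gamma_ofReal,
    Complex.Gamma_ofReal] at hΓ
  rw [eq_div_iff (Gamma_pos_of_pos (add_pos hp hq)).ne', mul_comm]
  exact_mod_cast hΓ.symm

theorem image_sq_Ioo_zero_one : (fun x : ℝ => x ^ 2) '' Ioo 0 1 = Ioo 0 1 := by
  ext u
  constructor
  · rintro ⟨x, ⟨hx0, hx1⟩, rfl⟩
    exact ⟨by positivity, by nlinarith⟩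
  · rintro ⟨hu0, hu1⟩
    refine ⟨√u, ⟨sqrt_pos.2 hu0, (sqrt_lt' one_pos).2 (by simpa)⟩, sq_sqrt hu0.le⟩

theorem Real.integral_rpow_mul_one_sub_sq_rpow {p q : ℝ} (hp : 0 < p) (hq : 0 < q) :
    ∫ x in Ioo (0 : ℝ) 1, x ^ (2 * p - 1) * (1 - x ^ 2) ^ (q - 1) =
      Gamma p * Gamma q / (2 * Gamma (p + q)) := by
  have hsubst := integral_image_eq_integral_abs_deriv_smul
    (measurableSet_Ioo (a := (0 : ℝ)) (b := 1)) (fun x _ => (hasDerivAt_pow 2 x).hasDerivWithinAt)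
    ((pow_left_strictMonoOn₀ two_ne_zero).injOn.mono fun x hx => hx.1.le)
    (fun u : ℝ => u ^ (p - 1) * (1 - u) ^ (q - 1))
  rw [image_sq_Ioo_zero_one, integral_rpow_mul_one_sub_rpow hp hq,
    setIntegral_congr_fun measurableSet_Ioo
      (g := fun x => 2 * (x ^ (2 * p - 1) * (1 - x ^ 2) ^ (q - 1))), integral_const_mul] at hsubst
  · rw [div_eq_iff (Gamma_pos_of_pos (add_pos hp hq)).ne'] at hsubst
    rw [eq_div_iff (by positivity), hsubst]
    ring
  · intro x ⟨hx0, _⟩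
    have hsq : (x ^ 2) ^ (p - 1) = x ^ (2 * (p - 1)) := by
      rw [← rpow_natCast, ← rpow_mul hx0.le, Nat.cast_ofNat]
    dsimp only
    rw [smul_eq_mul, hsq, abs_of_pos (by positivity), show 2 * p - 1 = 1 + 2 * (p - 1) by ring,
      rpow_add hx0, rpow_one]
    norm_num
    ring

theorem Real.integrableOn_rpow_mul_one_sub_sq_rpow {p q : ℝ} (hp : 0 < p) (hq : 0 < q) :
    IntegrableOn (fun x : ℝ => x ^ (2 * p - 1) * (1 - x ^ 2) ^ (q - 1)) (Ioo 0 1) := by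
  refine Integrable.of_integral_ne_zero ?_
  rw [integral_rpow_mul_one_sub_sq_rpow hp hq]
  have := Gamma_pos_of_pos hp
  have := Gamma_pos_of_pos hq
  have := Gamma_pos_of_pos (add_pos hp hq)
  positivity

section TermwiseIntegration

variable {α E : Type*} [MeasurableSpace α] {μ : Measure α}
  [NormedAddCommGroup E] {F : ℕ → α → E} {f : α → E}

theorem MeasureTheory.integrable_of_hasSum_of_summable_integral_norm
    (hF_int : ∀ n, Integrable (F n) μ) (hF_sum : Summable fun n => ∫ a, ‖F n a‖ ∂μ)
    (hf : ∀ᵐ a ∂μ, HasSum (fun n => F n a) (f a)) : Integrable f μ := by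
  refine ⟨aestronglyMeasurable_of_tendsto_ae atTop
    (fun n => Finset.aestronglyMeasurable_fun_sum _ fun i _ => (hF_int i).1)
    (hf.mono fun a ha => ha.tendsto_sum_nat), ?_⟩
  calc ∫⁻ a, ‖f a‖ₑ ∂μ ≤ ∫⁻ a, ∑' n, ‖F n a‖ₑ ∂μ :=
        lintegral_mono_ae (hf.mono fun a ha => ha.tsum_eq ▸ enorm_tsum_le_tsum_enorm)
    _ = ∑' n, ENNReal.ofReal (∫ a, ‖F n a‖ ∂μ) := by
        rw [lintegral_tsum fun n => (hF_int n).1.enorm]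
        simp only [ofReal_integral_norm_eq_lintegral_enorm (hF_int _)]
    _ = ENNReal.ofReal (∑' n, ∫ a, ‖F n a‖ ∂μ) :=
        (ENNReal.ofReal_tsum_of_nonneg (fun n => integral_nonneg fun a => norm_nonneg _)
          hF_sum).symm
    _ < ⊤ := ENNReal.ofReal_lt_top

theorem MeasureTheory.hasSum_integral_of_hasSum_of_summable_integral_norm
    [NormedSpace ℝ E] [CompleteSpace E]
    (hF_int : ∀ n, Integrable (F n) μ) (hF_sum : Summable fun n => ∫ a, ‖F n a‖ ∂μ)
    (hf : ∀ᵐ a ∂μ, HasSum (fun n => F n a) (f a)) :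
    HasSum (fun n => ∫ a, F n a ∂μ) (∫ a, f a ∂μ) := by
  rw [integral_congr_ae (hf.mono fun a ha => ha.tsum_eq.symm)]
  exact hasSum_integral_of_summable_integral_norm hF_int hF_sum

end TermwiseIntegration

noncomputable def fbKernelCoeff (ν : ℝ) (n : ℕ) : ℝ :=
  (-1) ^ n / (n.factorial * Gamma (n + ν + 1) * 2 ^ (2 * (n : ℝ) + ν))

theorem two_rpow_two_mul_add (ν : ℝ) (n : ℕ) : (2 : ℝ) ^ (2 * (n : ℝ) + ν) = 4 ^ n * 2 ^ ν := by
  rw [rpow_add two_pos, show 2 * (n : ℝ) = ((2 * n : ℕ) : ℝ) by push_cast; ring,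
    rpow_natCast, pow_mul]
  norm_num

theorem fbKernel_eq_tsum (ν : ℝ) {z : ℝ} (hz : 0 < z) :
    fbKernel ν z = ∑' n, fbKernelCoeff ν n * z ^ (2 * n) := by
  rw [fbKernel, if_neg hz.ne', besselJ, ← tsum_mul_left]
  refine tsum_congr fun n => ?_
  have hpow : z ^ (-ν) * z ^ (2 * (n : ℝ) + ν) = z ^ (2 * n) := by
    rw [← rpow_add hz, show -ν + (2 * n + ν) = ((2 * n : ℕ) : ℝ) by push_cast; ring,
      rpow_natCast]
  rw [div_rpow hz.le zero_le_two, fbKernelCoeff, ← hpow]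
  ring

theorem summable_fbKernelCoeff_mul_pow {ν : ℝ} (hν : -1 < ν) (z : ℝ) :
    Summable fun n => fbKernelCoeff ν n * z ^ (2 * n) := by
  refine Summable.of_norm_bounded_eventually_nat
    ((summable_pow_div_factorial (z ^ 2 / 4)).mul_left (2 ^ (-ν))) ?_
  filter_upwards [eventually_ge_atTop 2] with n hn
  have hn' : (2 : ℝ) ≤ n := by exact_mod_cast hn
  have hΓ : 1 ≤ Gamma (n + ν + 1) := by
    have := Gamma_strictMonoOn_Ici.monotoneOn (a := 2) (b := n + ν + 1) self_mem_Ici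
      (mem_Ici.2 (by linarith)) (by linarith)
    rwa [Gamma_two] at this
  rw [norm_mul, norm_pow, fbKernelCoeff, norm_div, norm_pow, norm_neg, norm_one, one_pow,
    two_rpow_two_mul_add, norm_eq_abs, abs_of_pos (by positivity), norm_eq_abs,
    div_pow, rpow_neg zero_le_two]
  calc 1 / (n.factorial * Gamma (n + ν + 1) * (4 ^ n * 2 ^ ν)) * |z| ^ (2 * n)
      = (z ^ 2) ^ n / (n.factorial * Gamma (n + ν + 1) * (4 ^ n * 2 ^ ν)) := by
        rw [pow_mul, sq_abs]; ring
    _ ≤ (z ^ 2) ^ n / (n.factorial * 1 * (4 ^ n * 2 ^ ν)) := by gcongr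
    _ = (2 ^ ν)⁻¹ * ((z ^ 2) ^ n / 4 ^ n / n.factorial) := by field_simp

theorem hasSum_fbKernel {ν : ℝ} (hν : -1 < ν) {z : ℝ} (hz : 0 < z) :
    HasSum (fun n => fbKernelCoeff ν n * z ^ (2 * n)) (fbKernel ν z) :=
  fbKernel_eq_tsum ν hz ▸ (summable_fbKernelCoeff_mul_pow hν z).hasSum

theorem Real.Gamma_nat_add_half_mul_factorial (n : ℕ) :
    Gamma (n + 1 / 2) * n.factorial * 4 ^ n = (2 * n).factorial * √π := by
  have hdup := Gamma_mul_Gamma_add_half (n + 1 / 2)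
  rw [show (n : ℝ) + 1 / 2 + 1 / 2 = n + 1 by ring, Gamma_nat_eq_factorial,
    show 2 * ((n : ℝ) + 1 / 2) = ((2 * n : ℕ) : ℝ) + 1 by push_cast; ring, Gamma_nat_eq_factorial,
    show (1 : ℝ) - ((2 * n : ℕ) + 1) = -((2 * n : ℕ) : ℝ) by ring,
    rpow_neg zero_le_two, rpow_natCast, pow_mul] at hdup
  norm_num at hdup
  rw [hdup]
  field_simp

noncomputable def cosProfile (ν x : ℝ) : ℝ :=
  2 ^ (ν + 1) * √π / Gamma (-ν - 1 / 2) * (1 - x ^ 2) ^ (-ν - 3 / 2)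

section CosProfile

variable {ν : ℝ}

theorem cosProfile_nonneg (hν : ν < -(1 / 2)) {x : ℝ} (hx : x ∈ Ioo (0 : ℝ) 1) :
    0 ≤ cosProfile ν x := by
  have := Gamma_pos_of_pos (show 0 < -ν - 1 / 2 by linarith)
  have := rpow_nonneg (show 0 ≤ 1 - x ^ 2 by nlinarith [hx.1, hx.2]) (-ν - 3 / 2)
  unfold cosProfile
  positivity

theorem integral_rpow_mul_cosProfile (hν : ν < -(1 / 2)) {p : ℝ} (hp : 0 < p) :
    ∫ x in Ioo (0 : ℝ) 1, x ^ (2 * p - 1) * cosProfile ν x =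
      2 ^ (ν + 1) * √π / Gamma (-ν - 1 / 2) *
        (Gamma p * Gamma (-ν - 1 / 2) / (2 * Gamma (p + (-ν - 1 / 2)))) := by
  simp_rw [cosProfile, mul_left_comm _ (2 ^ (ν + 1) * √π / _), integral_const_mul,
    show -ν - 3 / 2 = (-ν - 1 / 2) - 1 by ring]
  rw [integral_rpow_mul_one_sub_sq_rpow hp (by linarith)]

theorem integrableOn_rpow_mul_cosProfile (hν : ν < -(1 / 2)) {p : ℝ} (hp : 0 < p) :
    IntegrableOn (fun x => x ^ (2 * p - 1) * cosProfile ν x) (Ioo 0 1) := by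
  simp_rw [cosProfile, mul_left_comm _ (2 ^ (ν + 1) * √π / _),
    show -ν - 3 / 2 = (-ν - 1 / 2) - 1 by ring]
  exact (integrableOn_rpow_mul_one_sub_sq_rpow hp (by linarith)).const_mul _

theorem fbKernelCoeff_mul_integral_rpow_mul_cosProfile (hν₁ : -1 < ν) (hν₂ : ν < -(1 / 2))
    (n : ℕ) :
    fbKernelCoeff ν n * ∫ x in Ioo (0 : ℝ) 1, x ^ (2 * (n + ν + 1) - 1) * cosProfile ν x =
      (-1) ^ n / (2 * n).factorial := by
  have hp : 0 < (n : ℝ) + ν + 1 := by linarith [n.cast_nonneg (α := ℝ)]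
  have hΓp := (Gamma_pos_of_pos hp).ne'
  have hΓq := (Gamma_pos_of_pos (show 0 < -ν - 1 / 2 by linarith)).ne'
  have hΓh := (Gamma_pos_of_pos (show 0 < (n : ℝ) + 1 / 2 by positivity)).ne'
  have h2n : ((2 * n).factorial : ℝ) = Gamma (n + 1 / 2) * n.factorial * 4 ^ n / √π := by
    rw [Gamma_nat_add_half_mul_factorial]
    field_simp
  rw [integral_rpow_mul_cosProfile hν₂ hp,
    show (n : ℝ) + ν + 1 + (-ν - 1 / 2) = n + 1 / 2 by ring,
    fbKernelCoeff, two_rpow_two_mul_add, rpow_add_one two_ne_zero, h2n]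
  generalize Gamma (-ν - 1 / 2) = Γq at hΓq ⊢
  field_simp

end CosProfile

theorem integrableOn_and_integral_fbKernel_mul_cosProfile {ν y : ℝ} (hν₁ : -1 < ν)
    (hν₂ : ν < -(1 / 2)) (hy : 0 < y) :
    IntegrableOn (fun x => fbKernel ν (x * y) * x ^ (2 * ν + 1) * cosProfile ν x) (Ioo 0 1) ∧
      ∫ x in Ioo (0 : ℝ) 1, fbKernel ν (x * y) * x ^ (2 * ν + 1) * cosProfile ν x = cos y := by
  have hp (n : ℕ) : 0 < (n : ℝ) + ν + 1 := by linarith [n.cast_nonneg (α := ℝ)]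
  set F : ℕ → ℝ → ℝ := fun n x =>
    fbKernelCoeff ν n * y ^ (2 * n) * (x ^ (2 * (n + ν + 1) - 1) * cosProfile ν x)
  have hF_int (n : ℕ) : IntegrableOn (F n) (Ioo 0 1) :=
    (integrableOn_rpow_mul_cosProfile hν₂ (hp n)).const_mul _
  have hF_integral (n : ℕ) :
      ∫ x in Ioo (0 : ℝ) 1, F n x = (-1) ^ n * y ^ (2 * n) / (2 * n).factorial := by
    rw [integral_const_mul, mul_right_comm, fbKernelCoeff_mul_integral_rpow_mul_cosProfile hν₁ hν₂]
    ring
  have hF_norm (n : ℕ) : ∫ x in Ioo (0 : ℝ) 1, ‖F n x‖ = ‖∫ x in Ioo (0 : ℝ) 1, F n x‖ := by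
    have hw : ∀ x ∈ Ioo (0 : ℝ) 1, 0 ≤ x ^ (2 * (n + ν + 1) - 1) * cosProfile ν x :=
      fun x hx => mul_nonneg (rpow_nonneg hx.1.le _) (cosProfile_nonneg hν₂ hx)
    simp only [F, integral_const_mul, norm_mul (fbKernelCoeff ν n * y ^ (2 * n))]
    rw [setIntegral_congr_fun measurableSet_Ioo fun x hx => norm_of_nonneg (hw x hx),
      norm_of_nonneg (setIntegral_nonneg measurableSet_Ioo hw)]
  have hF_sum : Summable fun n => ∫ x in Ioo (0 : ℝ) 1, ‖F n x‖ := by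
    simp_rw [hF_norm, hF_integral]
    exact (hasSum_cos y).summable.norm
  have hF_hasSum : ∀ᵐ x ∂volume.restrict (Ioo (0 : ℝ) 1),
      HasSum (fun n => F n x) (fbKernel ν (x * y) * x ^ (2 * ν + 1) * cosProfile ν x) := by
    filter_upwards [ae_restrict_mem measurableSet_Ioo] with x hx
    have hterm (n : ℕ) :
        F n x = fbKernelCoeff ν n * (x * y) ^ (2 * n) * (x ^ (2 * ν + 1) * cosProfile ν x) := by
      dsimp only [F]
      rw [mul_pow, show 2 * ((n : ℝ) + ν + 1) - 1 = (2 * n : ℕ) + (2 * ν + 1) by push_cast; ring,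
        rpow_add hx.1, rpow_natCast]
      ring
    simp only [hterm, mul_assoc _ (x ^ (2 * ν + 1))]
    exact (hasSum_fbKernel hν₁ (mul_pos hx.1 hy)).mul_right _
  refine ⟨integrable_of_hasSum_of_summable_integral_norm hF_int hF_sum hF_hasSum, ?_⟩
  refine (hasSum_integral_of_hasSum_of_summable_integral_norm hF_int hF_sum hF_hasSum).unique ?_
  simpa only [hF_integral] using hasSum_cos y

theorem not_tendsto_atTop_zero_of_eq_cos {g : ℝ → ℂ} (hg : ∀ y > 0, g y = cos y) :
    ¬Tendsto g atTop (nhds 0) := by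
  intro h
  have hseq : Tendsto (fun k : ℕ => ((k + 1 : ℕ) : ℝ) * (2 * π)) atTop atTop :=
    (tendsto_natCast_atTop_atTop.comp (tendsto_add_atTop_nat 1)).atTop_mul_const (by positivity)
  have hone : g ∘ (fun k : ℕ => ((k + 1 : ℕ) : ℝ) * (2 * π)) = fun _ => 1 := by
    funext k
    rw [Function.comp_apply, hg _ (by positivity), cos_nat_mul_two_pi, Complex.ofReal_one]
  exact one_ne_zero (tendsto_nhds_unique tendsto_const_nhds (hone ▸ h.comp hseq))

theorem stmt9 (ν : ℝ) (hν₁ : -1 < ν) (hν₂ : ν < -(1/2))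
    (f : ℝ → ℂ)
    (hfdef : ∀ x : ℝ, f x =
      if 0 < x ∧ x < 1 then
        (((2 : ℝ) ^ (ν + 1) * Real.sqrt Real.pi / Real.Gamma (-ν - 1/2) *
          (1 - x ^ 2) ^ (-ν - 3/2) : ℝ) : ℂ)
      else 0) :
    (∀ y > (0 : ℝ),
      IntegrableOn (fun x => (fbKernel ν (x * y) * x ^ (2 * ν + 1)) • f x) (Ioi 0) ∧
      fbTransform ν f y = (Real.cos y : ℂ)) ∧
    ¬ Tendsto (fbTransform ν f) atTop (nhds 0) := by
  have htransform (y : ℝ) (hy : 0 < y) :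
      IntegrableOn (fun x => (fbKernel ν (x * y) * x ^ (2 * ν + 1)) • f x) (Ioi 0) ∧
        fbTransform ν f y = (Real.cos y : ℂ) := by
    obtain ⟨hint, hval⟩ := integrableOn_and_integral_fbKernel_mul_cosProfile hν₁ hν₂ hy
    have hin : EqOn (fun x => (fbKernel ν (x * y) * x ^ (2 * ν + 1)) • f x)
        (fun x => ((fbKernel ν (x * y) * x ^ (2 * ν + 1) * cosProfile ν x : ℝ) : ℂ)) (Ioo 0 1) :=
      fun x hx => by
        dsimp only
        rw [hfdef, if_pos (show 0 < x ∧ x < 1 from hx), Complex.real_smul, ← Complex.ofReal_mul]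
        rfl
    have hout : ∀ x ∈ Ioi (0 : ℝ) \ Ioo 0 1,
        (fbKernel ν (x * y) * x ^ (2 * ν + 1)) • f x = 0 :=
      fun x hx => by rw [hfdef, if_neg (show ¬(0 < x ∧ x < 1) from hx.2), smul_zero]
    refine ⟨(IntegrableOn.congr_fun hint.ofReal hin.symm measurableSet_Ioo).of_forall_sdiff_eq_zero
      measurableSet_Ioi hout, ?_⟩
    rw [fbTransform, setIntegral_eq_of_subset_of_forall_sdiff_eq_zero measurableSet_Ioi
      Ioo_subset_Ioi_self hout, setIntegral_congr_fun measurableSet_Ioo hin,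
      integral_complex_ofReal, hval]
  exact ⟨htransform, not_tendsto_atTop_zero_of_eq_cos fun y hy => (htransform y hy).2⟩
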